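/- Let n ≥ 2 and let Θ = Θ(z, z̄, w̄) be holomorphic near 0 in ℂ^{2n+1} with Θ = −w̄ + O(2) and Δ(0,0,0) ≠ 0. Let ζ = (ζ₁,…,ζₙ) and ξ be the holomorphic implicit functions of (z, w, λ₁,…,λₙ) satisfying w ≡ Θ(z, ζ(z,w,λ), ξ(z,w,λ)) and λ_k ≡ Θ_{z_k}(z, ζ(z,w,λ), ξ(z,w,λ)) for k = 1,…,n, and define Φ_{k₁,k₂}(z,w,λ) := Θ_{z_{k₁}z_{k₂}}(z, ζ(z,w,λ), ξ(z,w,λ)). Then for all k₁, k₂, ℓ₁, ℓ₂ ∈ {1,…,n}, identically near the base point: ∂²Φ_{k₁,k₂}/∂λ_{ℓ₁}∂λ_{ℓ₂} = (1/Δ³) Σ_{μ=1}^{n+1} Σ_{ν=1}^{n+1} Δ^μ_{[0_{1+ℓ₁}]} · Δ^ν_{[0_{1+ℓ₂}]} · { Δ · ∂⁴Θ/∂z_{k₁}∂z_{k₂}∂t̄_μ∂t̄_ν − Σ_{τ=1}^{n+1} Δ^τ_{[t̄^μ t̄^ν]} · ∂³Θ/∂z_{k₁}∂z_{k₂}∂t̄_τ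 }, where all determinants and derivatives of Θ on the right-hand side are evaluated at (z, ζ(z,w,λ), ξ(z,w,λ)). -/

import Mathlib

open Topology Filter Set

noncomputable section

/-- The space ℂⁿ × ℂⁿ × ℂ of variables (z, z̄, w̄) = (z, t̄). -/
abbrev Pt (n : ℕ) := (Fin n → ℂ) × (Fin n → ℂ) × ℂ

/-- Partial derivative ∂/∂z_k. -/
def pdZ {n : ℕ} (k : Fin n) (f : Pt n → ℂ) : Pt n → ℂ :=
  fun p => fderiv ℂ f p (Pi.single k 1, 0, 0)

/-- The direction in `Pt n` corresponding to the variable t̄_μ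
(the first n of these are the z̄_j, the last one is w̄). -/
def tdir (n : ℕ) (μ : Fin (n + 1)) : Pt n :=
  if h : (μ : ℕ) < n then (0, Pi.single ⟨μ, h⟩ 1, 0) else (0, 0, 1)

/-- Partial derivative ∂/∂t̄_μ. -/
def pdT {n : ℕ} (μ : Fin (n + 1)) (f : Pt n → ℂ) : Pt n → ℂ :=
  fun p => fderiv ℂ f p (tdir n μ)

/-- The (n+1)×(n+1) matrix whose first row is (Θ_{t̄_μ})_μ and whose (1+k)-th row
is (Θ_{z_k t̄_μ})_μ; its determinant is Δ. -/
def DeltaMat {n : ℕ} (Θ : Pt n → ℂ) (p : Pt n) : Matrix (Fin (n + 1)) (Fin (n + 1)) ℂ :=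
  Matrix.of fun i μ =>
    Fin.cons (α := fun _ => ℂ) (pdT μ Θ p) (fun k : Fin n => pdT μ (pdZ k Θ) p) i

/-- The Jacobian-like determinant Δ. -/
def Delta {n : ℕ} (Θ : Pt n → ℂ) (p : Pt n) : ℂ := (DeltaMat Θ p).det

/-- Δ^μ_{[0_{1+ℓ}]} : the determinant Δ with its μ-th column replaced by the
standard basis column with 1 in the (1+ℓ)-th entry. -/
def DeltaCol {n : ℕ} (Θ : Pt n → ℂ) (ℓ : Fin n) (μ : Fin (n + 1)) (p : Pt n) : ℂ :=
  ((DeltaMat Θ p).updateCol μ (Pi.single ℓ.succ 1)).det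

/-- Δ^τ_{[t̄^μ t̄^ν]} : the determinant Δ with its τ-th column replaced by
(Θ_{t̄_μ t̄_ν}, Θ_{z_1 t̄_μ t̄_ν}, …, Θ_{z_n t̄_μ t̄_ν})ᵀ. -/
def DeltaTT {n : ℕ} (Θ : Pt n → ℂ) (μ ν τ : Fin (n + 1)) (p : Pt n) : ℂ :=
  ((DeltaMat Θ p).updateCol τ
    (Fin.cons (α := fun _ => ℂ) (pdT ν (pdT μ Θ) p)
      (fun k : Fin n => pdT ν (pdT μ (pdZ k Θ)) p))).det

/-- The conjugate function Θ̄(a,b,c) := conj (Θ (conj a, conj b, conj c)). -/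
def conjFun {n : ℕ} (Θ : Pt n → ℂ) : Pt n → ℂ :=
  fun p => (starRingEnd ℂ)
    (Θ (fun k => (starRingEnd ℂ) (p.1 k), fun k => (starRingEnd ℂ) (p.2.1 k),
        (starRingEnd ℂ) p.2.2))

/-- Θ = -w̄ + O(2) : Θ vanishes at 0 and its differential at 0 is v ↦ -v_{w̄}. -/
def IsOrderTwo {n : ℕ} (Θ : Pt n → ℂ) : Prop :=
  Θ 0 = 0 ∧ ∀ v : Pt n, fderiv ℂ Θ 0 v = -v.2.2

/-- The pair of reality identities w̄ ≡ Θ̄(z̄, z, Θ(z, z̄, w̄)) and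
w ≡ Θ(z, z̄, Θ̄(z̄, z, w)), holding near the origin. -/
def Reality {n : ℕ} (Θ : Pt n → ℂ) : Prop :=
  (∀ᶠ p in 𝓝 (0 : Pt n), p.2.2 = conjFun Θ (p.2.1, p.1, Θ p)) ∧
  (∀ᶠ p in 𝓝 (0 : Pt n), p.2.2 = Θ (p.1, p.2.1, conjFun Θ (p.2.1, p.1, p.2.2)))

/-- The hypersurface M = {(z,w) : w = Θ(z, z̄, w̄)}. -/
def Mset {n : ℕ} (Θ : Pt n → ℂ) : Set ((Fin n → ℂ) × ℂ) :=
  {q | q.2 = Θ (q.1, fun k => (starRingEnd ℂ) (q.1 k), (starRingEnd ℂ) q.2)}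

/-- The Heisenberg pseudosphere of signature q :
{Im w = |z₁|² + ⋯ + |z_q|² − |z_{q+1}|² − ⋯ − |z_n|²}. -/
def HeisenbergPS (n q : ℕ) : Set ((Fin n → ℂ) × ℂ) :=
  {p | p.2.im = ∑ k : Fin n, (if (k : ℕ) < q then (1 : ℝ) else -1) * Complex.normSq (p.1 k)}

/-- M is pseudospherical at 0: some biholomorphism between neighborhoods of 0
maps M locally onto a piece of a Heisenberg pseudosphere of some signature q. -/
def PseudosphericalAt0 {n : ℕ} (M : Set ((Fin n → ℂ) × ℂ)) : Prop :=
  ∃ (U U' : Set ((Fin n → ℂ) × ℂ)) (h g : ((Fin n → ℂ) × ℂ) → (Fin n → ℂ) × ℂ) (q : ℕ),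
    q ≤ n ∧ IsOpen U ∧ IsOpen U' ∧ (0 : (Fin n → ℂ) × ℂ) ∈ U ∧
    AnalyticOnNhd ℂ h U ∧ AnalyticOnNhd ℂ g U' ∧
    Set.MapsTo h U U' ∧ Set.MapsTo g U' U ∧
    Set.LeftInvOn g h U ∧ Set.LeftInvOn h g U' ∧
    h '' (M ∩ U) = HeisenbergPS n q ∩ U'

/-- The first-order jet space ℂⁿ × ℂ × ℂⁿ of variables (z, w, λ), λ_k = w_{z_k}. -/
abbrev JPtC (n : ℕ) := (Fin n → ℂ) × ℂ × (Fin n → ℂ)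

/-- Partial derivative ∂/∂λ_ℓ on the jet space. -/
def pdLC {n : ℕ} (ℓ : Fin n) (G : JPtC n → ℂ) : JPtC n → ℂ :=
  fun q => fderiv ℂ G q (0, 0, Pi.single ℓ 1)

/-- The base point (0, Θ(0,0,0), Θ_{z₁}(0,0,0), …, Θ_{zₙ}(0,0,0)) in the jet space. -/
def basePtC {n : ℕ} (Θ : Pt n → ℂ) : JPtC n :=
  ((0 : Fin n → ℂ), Θ 0, fun k => pdZ k Θ 0)

/-!
Differentiating the identities `w = Θ(z, ζ, ξ)` and `λ_k = Θ_{z_k}(z, ζ, ξ)` in `λ_ℓ` shows that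
the `t̄`-coordinates of `∂(ζ, ξ)/∂λ_ℓ` solve a linear system with matrix `DeltaMat` and right-hand
side `e_{1+ℓ}`, so Cramer's rule gives them as `Δ^μ_{[0_{1+ℓ}]} / Δ`. Differentiating once more, the
second derivatives of `(ζ, ξ)` solve a system with the same matrix, whose right-hand side is built
from the `t̄t̄`-Hessians of the rows; Cramer's rule now produces the `Δ^τ_{[t̄^μ t̄^ν]}`. The formula
follows by substituting both into the second-order chain rule for `Θ_{z_{k₁} z_{k₂}}(z, ζ, ξ)`.
-/

section Calculus

variable {E : Type*} [NormedAddCommGroup E] [NormedSpace ℂ E] {f : E → ℂ} {x : E}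

theorem AnalyticAt.fderiv_apply {F : Type*} [NormedAddCommGroup F] [NormedSpace ℂ F]
    [CompleteSpace F] {g : E → F} (h : AnalyticAt ℂ g x) (v : E) :
    AnalyticAt ℂ (fun y => fderiv ℂ g y v) x :=
  ((ContinuousLinearMap.apply ℂ F v).analyticAt _).comp h.fderiv

theorem AnalyticAt.fderiv_fderiv_apply_comm [CompleteSpace E] (h : AnalyticAt ℂ f x) (v w : E) :
    fderiv ℂ (fun y => fderiv ℂ f y v) x w = fderiv ℂ (fun y => fderiv ℂ f y w) x v := by
  have hcomp (u : E) : fderiv ℂ (fun y => fderiv ℂ f y u) x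
      = (ContinuousLinearMap.apply ℂ ℂ u).comp (fderiv ℂ (fderiv ℂ f) x) :=
    ((ContinuousLinearMap.apply ℂ ℂ u).hasFDerivAt.comp x
      h.fderiv.differentiableAt.hasFDerivAt).fderiv
  rw [hcomp, hcomp]
  exact (h.contDiffAt (n := ⊤)).isSymmSndFDerivAt le_top w v

end Calculus

variable {n : ℕ}

theorem AnalyticAt.pdZ {f : Pt n → ℂ} {p : Pt n} (h : AnalyticAt ℂ f p) (k : Fin n) :
    AnalyticAt ℂ (pdZ k f) p :=
  h.fderiv_apply _

theorem AnalyticAt.pdT {f : Pt n → ℂ} {p : Pt n} (h : AnalyticAt ℂ f p) (μ : Fin (n + 1)) :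
    AnalyticAt ℂ (pdT μ f) p :=
  h.fderiv_apply _

theorem pdT_pdT_comm {f : Pt n → ℂ} {p : Pt n} (h : AnalyticAt ℂ f p) (μ ν : Fin (n + 1)) :
    pdT μ (pdT ν f) p = pdT ν (pdT μ f) p :=
  h.fderiv_fderiv_apply_comm _ _

theorem tdir_castSucc (k : Fin n) : tdir n k.castSucc = (0, Pi.single k 1, 0) := by
  simp [tdir]

theorem tdir_last : tdir n (Fin.last n) = (0, 0, 1) := by
  simp [tdir]

theorem fderiv_apply_eq_sum_pdT (f : Pt n → ℂ) (p : Pt n) (a : Fin n → ℂ) (b : ℂ) :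
    fderiv ℂ f p (0, a, b) = ∑ μ : Fin (n + 1), Fin.snoc (α := fun _ => ℂ) a b μ * pdT μ f p := by
  have hdecomp : ((0 : Fin n → ℂ), a, b)
      = ∑ μ : Fin (n + 1), Fin.snoc (α := fun _ => ℂ) a b μ • tdir n μ := by
    simp [Fin.sum_univ_castSucc, tdir_castSucc, tdir_last, Prod.ext_iff, Prod.fst_sum,
      Prod.snd_sum, ← pi_eq_sum_univ' a]
  simp [hdecomp, map_sum, pdT]

def rowFun (Θ : Pt n → ℂ) (i : Fin (n + 1)) : Pt n → ℂ :=
  Fin.cons (α := fun _ => Pt n → ℂ) Θ (fun k => pdZ k Θ) i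

theorem AnalyticAt.rowFun {Θ : Pt n → ℂ} {p : Pt n} (h : AnalyticAt ℂ Θ p) (i : Fin (n + 1)) :
    AnalyticAt ℂ (rowFun Θ i) p := by
  cases i using Fin.cases with
  | zero => exact h
  | succ k => exact h.pdZ k

theorem DeltaMat_apply (Θ : Pt n → ℂ) (p : Pt n) (i μ : Fin (n + 1)) :
    DeltaMat Θ p i μ = pdT μ (rowFun Θ i) p := by
  cases i using Fin.cases <;> simp [DeltaMat, rowFun]

def jetCoord (i : Fin (n + 1)) (q : JPtC n) : ℂ :=
  Fin.cons (α := fun _ => ℂ) q.2.1 q.2.2 i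

theorem pdLC_jetCoord (ℓ : Fin n) (i : Fin (n + 1)) (q : JPtC n) :
    pdLC ℓ (jetCoord i) q = (Pi.single ℓ.succ 1 : Fin (n + 1) → ℂ) i := by
  let snd : JPtC n →L[ℂ] ℂ × (Fin n → ℂ) := ContinuousLinearMap.snd ℂ _ _
  cases i using Fin.cases with
  | zero =>
    rw [pdLC, show jetCoord 0 = ⇑((ContinuousLinearMap.fst ℂ _ _).comp snd) from rfl,
      ContinuousLinearMap.fderiv]
    simp [snd]
  | succ k =>
    rw [pdLC, show jetCoord k.succ
        = ⇑((ContinuousLinearMap.proj k).comp ((ContinuousLinearMap.snd ℂ _ _).comp snd)) from rfl,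
      ContinuousLinearMap.fderiv]
    simp [snd, Pi.single_apply]

-- The coordinates of `∂Z/∂λ_ℓ` with respect to the directions `tdir n μ`.
def implicitLamDeriv (Z : JPtC n → (Fin n → ℂ) × ℂ) (ℓ : Fin n) (q : JPtC n) :
    Fin (n + 1) → ℂ :=
  Fin.snoc (α := fun _ => ℂ) (fderiv ℂ Z q (0, 0, Pi.single ℓ 1)).1
    (fderiv ℂ Z q (0, 0, Pi.single ℓ 1)).2

theorem AnalyticAt.implicitLamDeriv {Z : JPtC n → (Fin n → ℂ) × ℂ} {q : JPtC n}
    (hZ : AnalyticAt ℂ Z q) (ℓ : Fin n) (μ : Fin (n + 1)) :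
    AnalyticAt ℂ (fun q' => implicitLamDeriv Z ℓ q' μ) q := by
  have hdZ := hZ.fderiv_apply (0, 0, Pi.single ℓ 1)
  cases μ using Fin.lastCases with
  | last => simpa [_root_.implicitLamDeriv] using analyticAt_snd.fun_comp hdZ
  | cast k =>
    simpa [_root_.implicitLamDeriv] using analyticAt_pi_iff.1 (analyticAt_fst.fun_comp hdZ) k

theorem pdLC_comp_eq_sum {f : Pt n → ℂ} {Z : JPtC n → (Fin n → ℂ) × ℂ} {q : JPtC n}
    (hf : DifferentiableAt ℂ f (q.1, Z q)) (hZ : DifferentiableAt ℂ Z q) (ℓ : Fin n) :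
    pdLC ℓ (fun q' => f (q'.1, Z q')) q
      = ∑ μ : Fin (n + 1), implicitLamDeriv Z ℓ q μ * pdT μ f (q.1, Z q) := by
  have hF : HasFDerivAt (fun q' : JPtC n => (q'.1, Z q'))
      ((ContinuousLinearMap.fst ℂ _ _).prod (fderiv ℂ Z q)) q :=
    hasFDerivAt_fst.prodMk hZ.hasFDerivAt
  rw [pdLC, fderiv_fun_comp q hf hF.differentiableAt,
    hF.fderiv]
  exact fderiv_apply_eq_sum_pdT f _ _ _

section JetDerivative

variable {G H : JPtC n → ℂ} {q : JPtC n} (ℓ : Fin n)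

theorem pdLC_congr (h : G =ᶠ[𝓝 q] H) : pdLC ℓ G q = pdLC ℓ H q := by
  rw [pdLC, h.fderiv_eq, pdLC]

theorem pdLC_mul (hG : DifferentiableAt ℂ G q) (hH : DifferentiableAt ℂ H q) :
    pdLC ℓ (fun q' => G q' * H q') q = pdLC ℓ G q * H q + G q * pdLC ℓ H q := by
  simp only [pdLC, fderiv_fun_mul hG hH, add_apply, smul_apply]
  ring

theorem pdLC_sum {ι : Type*} (s : Finset ι) {F : ι → JPtC n → ℂ}
    (h : ∀ i ∈ s, DifferentiableAt ℂ (F i) q) :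
    pdLC ℓ (fun q' => ∑ i ∈ s, F i q') q = ∑ i ∈ s, pdLC ℓ (F i) q := by
  simp only [pdLC, fderiv_fun_sum h, sum_apply]

end JetDerivative

theorem pdLC_pdLC_comp_eq_sum {f : Pt n → ℂ} {Z : JPtC n → (Fin n → ℂ) × ℂ} {q : JPtC n}
    (hf : AnalyticAt ℂ f (q.1, Z q)) (hZ : AnalyticAt ℂ Z q) (ℓ₁ ℓ₂ : Fin n) :
    pdLC ℓ₁ (pdLC ℓ₂ (fun q' => f (q'.1, Z q'))) q
      = ∑ μ : Fin (n + 1),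
          pdLC ℓ₁ (fun q' => implicitLamDeriv Z ℓ₂ q' μ) q * pdT μ f (q.1, Z q)
        + ∑ μ : Fin (n + 1), ∑ ν : Fin (n + 1),
            implicitLamDeriv Z ℓ₁ q μ * implicitLamDeriv Z ℓ₂ q ν * pdT ν (pdT μ f) (q.1, Z q) := by
  have hF : AnalyticAt ℂ (fun q' : JPtC n => (q'.1, Z q')) q := analyticAt_fst.prod hZ
  have hcomp {g : Pt n → ℂ} (hg : AnalyticAt ℂ g (q.1, Z q)) :
      DifferentiableAt ℂ (fun q' => g (q'.1, Z q')) q :=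
    (hg.comp (f := fun q' : JPtC n => (q'.1, Z q')) hF).differentiableAt
  have hfirst : pdLC ℓ₂ (fun q' => f (q'.1, Z q')) =ᶠ[𝓝 q]
      fun q' => ∑ μ, implicitLamDeriv Z ℓ₂ q' μ * pdT μ f (q'.1, Z q') := by
    filter_upwards [hZ.eventually_analyticAt,
      hF.continuousAt.eventually hf.eventually_analyticAt] with q' hZq' hfq'
    exact pdLC_comp_eq_sum hfq'.differentiableAt hZq'.differentiableAt ℓ₂
  have hγ (μ : Fin (n + 1)) := (hZ.implicitLamDeriv ℓ₂ μ).differentiableAt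
  have hterm (μ : Fin (n + 1)) :
      pdLC ℓ₁ (fun q' => implicitLamDeriv Z ℓ₂ q' μ * pdT μ f (q'.1, Z q')) q
        = pdLC ℓ₁ (fun q' => implicitLamDeriv Z ℓ₂ q' μ) q * pdT μ f (q.1, Z q)
          + ∑ ν : Fin (n + 1),
              implicitLamDeriv Z ℓ₁ q ν * implicitLamDeriv Z ℓ₂ q μ * pdT μ (pdT ν f) (q.1, Z q) := by
    rw [pdLC_mul ℓ₁ (hγ μ) (hcomp (hf.pdT μ)),
      pdLC_comp_eq_sum (hf.pdT μ).differentiableAt hZ.differentiableAt ℓ₁, Finset.mul_sum]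
    congr 1
    exact Finset.sum_congr rfl fun ν _ => by rw [pdT_pdT_comm hf]; ring
  rw [pdLC_congr ℓ₁ hfirst, pdLC_sum ℓ₁ _ fun μ _ => (hγ μ).fun_mul (hcomp (hf.pdT μ))]
  simp only [hterm, Finset.sum_add_distrib]
  congr 1
  exact Finset.sum_comm

open Matrix

theorem Matrix.eq_det_inv_mul_cramer_of_mulVec_eq {ι K : Type*} [Fintype ι] [DecidableEq ι]
    [Field K] {A : Matrix ι ι K} {x b : ι → K} (hA : A.det ≠ 0) (h : A *ᵥ x = b) (i : ι) :
    x i = A.det⁻¹ * A.cramer b i := by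
  rw [← h, cramer_eq_adjugate_mulVec, mulVec_mulVec, adjugate_mul,
    smul_mulVec, one_mulVec, Pi.smul_apply, smul_eq_mul, inv_mul_cancel_left₀ hA]

theorem continuousAt_Delta {Θ : Pt n → ℂ} {p : Pt n} (h : AnalyticAt ℂ Θ p) :
    ContinuousAt (Delta Θ) p := by
  have hM : ContinuousAt (DeltaMat Θ) p := continuousAt_pi.2 fun i => continuousAt_pi.2 fun μ => by
    simpa only [DeltaMat_apply] using ((h.rowFun i).pdT μ).continuousAt
  exact continuous_id.matrix_det.continuousAt.comp hM

theorem cramer_DeltaMat_single (Θ : Pt n → ℂ) (p : Pt n) (ℓ : Fin n) (μ : Fin (n + 1)) :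
    (DeltaMat Θ p).cramer (Pi.single ℓ.succ 1) μ = DeltaCol Θ ℓ μ p :=
  cramer_apply _ _ _

theorem cramer_DeltaMat_pdT_pdT_rowFun (Θ : Pt n → ℂ) (p : Pt n) (μ ν τ : Fin (n + 1)) :
    (DeltaMat Θ p).cramer (fun i => pdT ν (pdT μ (rowFun Θ i)) p) τ = DeltaTT Θ μ ν τ p := by
  rw [cramer_apply, DeltaTT]
  congr 2
  funext i
  cases i using Fin.cases <;> rfl

section ImplicitSolution

variable {Θ : Pt n → ℂ} {Z : JPtC n → (Fin n → ℂ) × ℂ} {q : JPtC n}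
  (hΘ : AnalyticAt ℂ Θ (q.1, Z q)) (hZ : AnalyticAt ℂ Z q)
  (hsol : ∀ᶠ q' in 𝓝 q, ∀ i, jetCoord i q' = rowFun Θ i (q'.1, Z q'))
include hΘ hZ hsol

theorem DeltaMat_mulVec_implicitLamDeriv (ℓ : Fin n) :
    DeltaMat Θ (q.1, Z q) *ᵥ implicitLamDeriv Z ℓ q = Pi.single ℓ.succ 1 := by
  ext i
  rw [← pdLC_jetCoord ℓ i q, pdLC_congr ℓ (hsol.mono fun _ h => h i),
    pdLC_comp_eq_sum (hΘ.rowFun i).differentiableAt hZ.differentiableAt]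
  simp only [mulVec, dotProduct, DeltaMat_apply, mul_comm]

theorem implicitLamDeriv_eq (hΔ : Delta Θ (q.1, Z q) ≠ 0) (ℓ : Fin n) (μ : Fin (n + 1)) :
    implicitLamDeriv Z ℓ q μ = (Delta Θ (q.1, Z q))⁻¹ * DeltaCol Θ ℓ μ (q.1, Z q) := by
  rw [eq_det_inv_mul_cramer_of_mulVec_eq hΔ
    (DeltaMat_mulVec_implicitLamDeriv hΘ hZ hsol ℓ), cramer_DeltaMat_single, Delta]

theorem DeltaMat_mulVec_pdLC_implicitLamDeriv (ℓ₁ ℓ₂ : Fin n) :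
    DeltaMat Θ (q.1, Z q) *ᵥ (fun μ => pdLC ℓ₁ (fun q' => implicitLamDeriv Z ℓ₂ q' μ) q)
      = -∑ μ : Fin (n + 1), ∑ ν : Fin (n + 1),
          (implicitLamDeriv Z ℓ₁ q μ * implicitLamDeriv Z ℓ₂ q ν) •
            fun i => pdT ν (pdT μ (rowFun Θ i)) (q.1, Z q) := by
  ext i
  have hconst : pdLC ℓ₂ (fun q' => rowFun Θ i (q'.1, Z q')) =ᶠ[𝓝 q]
      fun _ => (Pi.single ℓ₂.succ 1 : Fin (n + 1) → ℂ) i := by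
    filter_upwards [hsol.eventually_nhds] with q' hq'
    rw [← pdLC_jetCoord ℓ₂ i q', pdLC_congr ℓ₂ (hq'.mono fun _ h => (h i).symm)]
  have hzero : pdLC ℓ₁ (pdLC ℓ₂ (fun q' => rowFun Θ i (q'.1, Z q'))) q = 0 := by
    rw [pdLC_congr ℓ₁ hconst, pdLC, fderiv_const_apply, _root_.zero_apply]
  rw [pdLC_pdLC_comp_eq_sum (hΘ.rowFun i) hZ] at hzero
  simp only [mulVec, dotProduct, DeltaMat_apply, Pi.neg_apply, Finset.sum_apply,
    Pi.smul_apply, smul_eq_mul, mul_comm (pdT _ (rowFun Θ i) _)]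
  linear_combination hzero

theorem pdLC_implicitLamDeriv_eq (hΔ : Delta Θ (q.1, Z q) ≠ 0) (ℓ₁ ℓ₂ : Fin n)
    (τ : Fin (n + 1)) :
    pdLC ℓ₁ (fun q' => implicitLamDeriv Z ℓ₂ q' τ) q
      = -((Delta Θ (q.1, Z q))⁻¹ * ∑ μ : Fin (n + 1), ∑ ν : Fin (n + 1),
          implicitLamDeriv Z ℓ₁ q μ * implicitLamDeriv Z ℓ₂ q ν * DeltaTT Θ μ ν τ (q.1, Z q)) := by
  rw [eq_det_inv_mul_cramer_of_mulVec_eq hΔ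
    (DeltaMat_mulVec_pdLC_implicitLamDeriv hΘ hZ hsol ℓ₁ ℓ₂) τ]
  simp only [map_neg, map_sum, map_smul, Pi.neg_apply, Finset.sum_apply, Pi.smul_apply,
    smul_eq_mul, cramer_DeltaMat_pdT_pdT_rowFun, Delta, mul_neg]

end ImplicitSolution

theorem cramer_substitution_identity {K ι : Type*} [Field K] [Fintype ι] {d : K} (hd : d ≠ 0)
    (c₁ c₂ g : ι → K) (g₂ : ι → ι → K) (T : ι → ι → ι → K) :
    ∑ τ, -(d⁻¹ * ∑ μ, ∑ ν, d⁻¹ * c₁ μ * (d⁻¹ * c₂ ν) * T μ ν τ) * g τ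
      + ∑ μ, ∑ ν, d⁻¹ * c₁ μ * (d⁻¹ * c₂ ν) * g₂ μ ν
    = 1 / d ^ 3 * ∑ μ, ∑ ν, c₁ μ * c₂ ν * (d * g₂ μ ν - ∑ τ, T μ ν τ * g τ) := by
  have hswap : ∑ τ, -(d⁻¹ * ∑ μ, ∑ ν, d⁻¹ * c₁ μ * (d⁻¹ * c₂ ν) * T μ ν τ) * g τ
      = ∑ μ, ∑ ν, -(d⁻¹ * (d⁻¹ * c₁ μ * (d⁻¹ * c₂ ν)) * ∑ τ, T μ ν τ * g τ) := by
    simp only [Finset.mul_sum, Finset.sum_mul, neg_mul, Finset.sum_neg_distrib, neg_inj]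
    rw [Finset.sum_comm]
    refine Finset.sum_congr rfl fun μ _ => ?_
    rw [Finset.sum_comm]
    simp only [mul_assoc]
  rw [hswap, ← Finset.sum_add_distrib, Finset.mul_sum]
  refine Finset.sum_congr rfl fun μ _ => ?_
  rw [← Finset.sum_add_distrib, Finset.mul_sum]
  refine Finset.sum_congr rfl fun ν _ => ?_
  field_simp
  ring

theorem second_jet_derivative_of_Phi_general {n : ℕ} (Θ : Pt n → ℂ)
    (hΘ : AnalyticAt ℂ Θ 0) (hLevi : Delta Θ 0 ≠ 0)
    (ZX : JPtC n → (Fin n → ℂ) × ℂ)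
    (hZX : AnalyticAt ℂ ZX (basePtC Θ)) (hZX0 : ZX (basePtC Θ) = 0)
    (hid : ∀ᶠ q in 𝓝 (basePtC Θ),
      q.2.1 = Θ (q.1, ZX q) ∧ ∀ k : Fin n, q.2.2 k = pdZ k Θ (q.1, ZX q)) :
    ∀ k₁ k₂ ℓ₁ ℓ₂ : Fin n, ∀ᶠ q in 𝓝 (basePtC Θ),
      pdLC ℓ₁ (pdLC ℓ₂ (fun q' => pdZ k₂ (pdZ k₁ Θ) (q'.1, ZX q'))) q =
        (1 / (Delta Θ (q.1, ZX q)) ^ 3) *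
          ∑ μ : Fin (n + 1), ∑ ν : Fin (n + 1),
            DeltaCol Θ ℓ₁ μ (q.1, ZX q) * DeltaCol Θ ℓ₂ ν (q.1, ZX q) *
              (Delta Θ (q.1, ZX q) * pdT ν (pdT μ (pdZ k₂ (pdZ k₁ Θ))) (q.1, ZX q) -
                ∑ τ : Fin (n + 1),
                  DeltaTT Θ μ ν τ (q.1, ZX q) * pdT τ (pdZ k₂ (pdZ k₁ Θ)) (q.1, ZX q)) := by
  intro k₁ k₂ ℓ₁ ℓ₂
  have hF : Tendsto (fun q : JPtC n => (q.1, ZX q)) (𝓝 (basePtC Θ)) (𝓝 0) := by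
    have hbase : ((basePtC Θ).1, ZX (basePtC Θ)) = (0 : Pt n) := by rw [hZX0]; rfl
    exact hbase ▸ (continuousAt_fst.prodMk hZX.continuousAt).tendsto
  have hsol : ∀ᶠ q in 𝓝 (basePtC Θ), ∀ i, jetCoord i q = rowFun Θ i (q.1, ZX q) :=
    hid.mono fun q h i => by cases i using Fin.cases; exacts [h.1, h.2 _]
  filter_upwards [hZX.eventually_analyticAt, hF.eventually hΘ.eventually_analyticAt,
    hF.eventually ((continuousAt_Delta hΘ).eventually_ne hLevi), hsol.eventually_nhds]
    with q hZq hΘq hΔq hsolq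
  rw [pdLC_pdLC_comp_eq_sum ((hΘq.pdZ k₁).pdZ k₂) hZq]
  simp only [pdLC_implicitLamDeriv_eq hΘq hZq hsolq hΔq, implicitLamDeriv_eq hΘq hZq hsolq hΔq]
  exact cramer_substitution_identity hΔq _ _ _ _ _

/-- the explicit expression of the second-order jet derivatives
∂²Φ_{k₁,k₂}/∂λ_{ℓ₁}∂λ_{ℓ₂} of the right-hand sides Φ_{k₁,k₂}(z,w,λ) :=
Θ_{z_{k₁}z_{k₂}}(z, ζ(z,w,λ), ξ(z,w,λ)) of the associated PDE system in terms of the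
fourth-order jet of Θ, where (ζ, ξ) = ZX are the implicit functions. -/
theorem second_jet_derivative_of_Phi {n : ℕ} (hn : 2 ≤ n) (Θ : Pt n → ℂ)
    (hΘ : AnalyticAt ℂ Θ 0) (h2 : IsOrderTwo Θ) (hLevi : Delta Θ 0 ≠ 0)
    (ZX : JPtC n → (Fin n → ℂ) × ℂ)
    (hZX : AnalyticAt ℂ ZX (basePtC Θ)) (hZX0 : ZX (basePtC Θ) = 0)
    (hid : ∀ᶠ q in 𝓝 (basePtC Θ),
      q.2.1 = Θ (q.1, ZX q) ∧ ∀ k : Fin n, q.2.2 k = pdZ k Θ (q.1, ZX q)) :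
    ∀ k₁ k₂ ℓ₁ ℓ₂ : Fin n, ∀ᶠ q in 𝓝 (basePtC Θ),
      pdLC ℓ₁ (pdLC ℓ₂ (fun q' => pdZ k₂ (pdZ k₁ Θ) (q'.1, ZX q'))) q =
        (1 / (Delta Θ (q.1, ZX q)) ^ 3) *
          ∑ μ : Fin (n + 1), ∑ ν : Fin (n + 1),
            DeltaCol Θ ℓ₁ μ (q.1, ZX q) * DeltaCol Θ ℓ₂ ν (q.1, ZX q) *
              (Delta Θ (q.1, ZX q) * pdT ν (pdT μ (pdZ k₂ (pdZ k₁ Θ))) (q.1, ZX q) -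
                ∑ τ : Fin (n + 1),
                  DeltaTT Θ μ ν τ (q.1, ZX q) * pdT τ (pdZ k₂ (pdZ k₁ Θ)) (q.1, ZX q)) :=
  second_jet_derivative_of_Phi_general Θ hΘ hLevi ZX hZX hZX0 hid
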